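/- Let α₁, α₂, α₃ ∈ ℝ. The following are equivalent: (i) for every twice continuously differentiable matrix field P : ℝ³ → Sym(3) with values in the symmetric 3×3 matrices, the matrix Curl(α₁ dev sym Curl P + α₂ skew Curl P + α₃ tr(Curl P)·𝟙) is symmetric at every point; (ii) α₁ = −α₂. -/

import Mathlib

/-!
For symmetric `P` the trace of `Curl P` vanishes, so the moment tensor reduces to
`((α₁ + α₂) / 2) Curl P + ((α₁ - α₂) / 2) (Curl P)ᵀ`. The Curl of the second summand is the
incompatibility `inc P = Curl ((Curl P)ᵀ)`, which is symmetric for symmetric `P` by the symmetry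
of second derivatives. Hence the condition holds iff `(α₁ + α₂) Curl Curl P` is always symmetric,
and `P = y₀ y₁ e₀ ⊗ e₀`, with `Curl Curl P = e₀ ⊗ e₁`, forces `α₁ + α₂ = 0`.
-/

open Matrix

/-- Partial derivative in direction `j` of a scalar field on `ℝ³`. -/
noncomputable def pd (j : Fin 3) (f : (Fin 3 → ℝ) → ℝ) (x : Fin 3 → ℝ) : ℝ :=
  fderiv ℝ f x (Pi.single j 1)

/-- Gradient of a scalar field on `ℝ³`. -/
noncomputable def grad3 (f : (Fin 3 → ℝ) → ℝ) (x : Fin 3 → ℝ) : Fin 3 → ℝ :=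
  fun i => pd i f x

/-- Classical curl of a vector field on `ℝ³`. -/
noncomputable def vcurl (v : (Fin 3 → ℝ) → Fin 3 → ℝ) (x : Fin 3 → ℝ) : Fin 3 → ℝ :=
  ![pd 1 (fun y => v y 2) x - pd 2 (fun y => v y 1) x,
    pd 2 (fun y => v y 0) x - pd 0 (fun y => v y 2) x,
    pd 0 (fun y => v y 1) x - pd 1 (fun y => v y 0) x]

/-- Divergence of a vector field on `ℝ³`. -/
noncomputable def vdiv (v : (Fin 3 → ℝ) → Fin 3 → ℝ) (x : Fin 3 → ℝ) : ℝ :=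
  ∑ i, pd i (fun y => v y i) x

/-- Row-wise Curl of a matrix field on `ℝ³`: the `i`-th row of `mCurl P`
is the curl of the `i`-th row of `P`. -/
noncomputable def mCurl (P : (Fin 3 → ℝ) → Matrix (Fin 3) (Fin 3) ℝ) (x : Fin 3 → ℝ) :
    Matrix (Fin 3) (Fin 3) ℝ :=
  Matrix.of fun i j => vcurl (fun y => P y i) x j

/-- Jacobian matrix of a vector field on `ℝ³`. -/
noncomputable def jac (v : (Fin 3 → ℝ) → Fin 3 → ℝ) (x : Fin 3 → ℝ) :
    Matrix (Fin 3) (Fin 3) ℝ :=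
  Matrix.of fun i j => pd j (fun y => v y i) x

/-- Axial vector of a (skew-symmetric) `3 × 3` matrix: with `A 1 2 = -a₁`,
`A 2 0 = -a₂`, `A 0 1 = -a₃` (so `A 2 1 = a₁`, `A 0 2 = a₂`, `A 1 0 = a₃`). -/
def axl (A : Matrix (Fin 3) (Fin 3) ℝ) : Fin 3 → ℝ :=
  ![A 2 1, A 0 2, A 1 0]

/-- The skew-symmetric matrix `anti a` characterized by `(anti a) ⬝ v = a × v`. -/
def antiM (a : Fin 3 → ℝ) : Matrix (Fin 3) (Fin 3) ℝ :=
  !![0, -a 2, a 1; a 2, 0, -a 0; -a 1, a 0, 0]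

/-- Symmetric part of a matrix. -/
noncomputable def symM (X : Matrix (Fin 3) (Fin 3) ℝ) : Matrix (Fin 3) (Fin 3) ℝ :=
  (1 / 2 : ℝ) • (X + Xᵀ)

/-- Skew-symmetric part of a matrix. -/
noncomputable def skewM (X : Matrix (Fin 3) (Fin 3) ℝ) : Matrix (Fin 3) (Fin 3) ℝ :=
  (1 / 2 : ℝ) • (X - Xᵀ)

/-- Deviatoric (trace-free) part of a matrix. -/
noncomputable def devM (X : Matrix (Fin 3) (Fin 3) ℝ) : Matrix (Fin 3) (Fin 3) ℝ :=
  X - (Matrix.trace X / 3) • (1 : Matrix (Fin 3) (Fin 3) ℝ)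

/-- Frobenius inner product `⟨X, Y⟩ = tr (X Yᵀ)`. -/
noncomputable def minner (X Y : Matrix (Fin 3) (Fin 3) ℝ) : ℝ :=
  Matrix.trace (X * Yᵀ)

/-- Squared Frobenius norm. -/
noncomputable def mnormSq (X : Matrix (Fin 3) (Fin 3) ℝ) : ℝ :=
  minner X X

/-- Squared Euclidean norm of a vector in `ℝ³`. -/
def vnormSq (v : Fin 3 → ℝ) : ℝ :=
  ∑ i, (v i) ^ 2

lemma pd_const (c : ℝ) (j : Fin 3) (x : Fin 3 → ℝ) : pd j (fun _ => c) x = 0 := by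
  simp [pd]

lemma pd_apply (i j : Fin 3) (x : Fin 3 → ℝ) :
    pd j (fun y => y i) x = (Pi.single j 1 : Fin 3 → ℝ) i := by
  rw [pd, (hasFDerivAt_apply i x).fderiv, ContinuousLinearMap.proj_apply]

lemma pd_const_mul (c : ℝ) (f : (Fin 3 → ℝ) → ℝ) (j : Fin 3) (x : Fin 3 → ℝ) :
    pd j (fun y => c * f y) x = c * pd j f x := by
  rw [pd, show (fun y => c * f y) = c • f from rfl, fderiv_const_smul_field]
  rfl

lemma pd_neg (f : (Fin 3 → ℝ) → ℝ) (j : Fin 3) (x : Fin 3 → ℝ) :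
    pd j (fun y => -f y) x = -pd j f x := by
  simp [pd]

section

variable {f g : (Fin 3 → ℝ) → ℝ} {x : Fin 3 → ℝ}

lemma pd_add (hf : DifferentiableAt ℝ f x) (hg : DifferentiableAt ℝ g x) (j : Fin 3) :
    pd j (fun y => f y + g y) x = pd j f x + pd j g x := by
  simp [pd, fderiv_fun_add hf hg]

lemma pd_sub (hf : DifferentiableAt ℝ f x) (hg : DifferentiableAt ℝ g x) (j : Fin 3) :
    pd j (fun y => f y - g y) x = pd j f x - pd j g x := by
  simp [pd, fderiv_fun_sub hf hg]

lemma pd_mul (hf : DifferentiableAt ℝ f x) (hg : DifferentiableAt ℝ g x) (j : Fin 3) :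
    pd j (fun y => f y * g y) x = pd j f x * g x + f x * pd j g x := by
  simp [pd, fderiv_fun_mul hf hg]
  ring

end

lemma pd_apply_mul_apply (a b j : Fin 3) (x : Fin 3 → ℝ) :
    pd j (fun y => y a * y b) x =
      (Pi.single j 1 : Fin 3 → ℝ) a * x b + x a * (Pi.single j 1 : Fin 3 → ℝ) b := by
  rw [pd_mul (differentiableAt_apply a x) (differentiableAt_apply b x), pd_apply, pd_apply]

lemma ContDiff.pd {n : WithTop ℕ∞} {f : (Fin 3 → ℝ) → ℝ} (hf : ContDiff ℝ (n + 1) f)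
    (k : Fin 3) : ContDiff ℝ n (pd k f) :=
  (hf.fderiv_right le_rfl).clm_apply contDiff_const

lemma pd_comm {f : (Fin 3 → ℝ) → ℝ} (hf : ContDiff ℝ 2 f) (a b : Fin 3) (x : Fin 3 → ℝ) :
    pd a (pd b f) x = pd b (pd a f) x := by
  have hsymm : IsSymmSndFDerivAt ℝ f x :=
    hf.contDiffAt.isSymmSndFDerivAt (by rw [minSmoothness_of_isRCLikeNormedField])
  have hdiff : DifferentiableAt ℝ (fderiv ℝ f) x :=
    (hf.fderiv_right one_add_one_eq_two.le).differentiable one_ne_zero x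
  have hsnd : ∀ v w, fderiv ℝ (fun y => fderiv ℝ f y v) x w = fderiv ℝ (fderiv ℝ f) x w v := by
    intro v w
    rw [fderiv_clm_apply hdiff (differentiableAt_const v)]
    simp
  change fderiv ℝ (fun y => fderiv ℝ f y (Pi.single b 1)) x (Pi.single a 1) =
    fderiv ℝ (fun y => fderiv ℝ f y (Pi.single a 1)) x (Pi.single b 1)
  rw [hsnd, hsnd, hsymm.eq]

noncomputable def incM (P : (Fin 3 → ℝ) → Matrix (Fin 3) (Fin 3) ℝ) (x : Fin 3 → ℝ) :
    Matrix (Fin 3) (Fin 3) ℝ :=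
  mCurl (fun y => (mCurl P y)ᵀ) x

section

variable {A B P : (Fin 3 → ℝ) → Matrix (Fin 3) (Fin 3) ℝ}

lemma mCurl_smul (c : ℝ) (x : Fin 3 → ℝ) : mCurl (fun y => c • A y) x = c • mCurl A x := by
  ext i j
  fin_cases j <;> simp [mCurl, vcurl, pd_const_mul, mul_sub]

lemma mCurl_add {x : Fin 3 → ℝ} (hA : ∀ i j, DifferentiableAt ℝ (fun y => A y i j) x)
    (hB : ∀ i j, DifferentiableAt ℝ (fun y => B y i j) x) :
    mCurl (fun y => A y + B y) x = mCurl A x + mCurl B x := by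
  ext i j
  fin_cases j <;> simp [mCurl, vcurl, pd_add (hA _ _) (hB _ _), add_sub_add_comm]

lemma contDiff_mCurl_apply {n : WithTop ℕ∞} (hP : ∀ i j, ContDiff ℝ (n + 1) fun y => P y i j)
    (i j : Fin 3) : ContDiff ℝ n fun y => mCurl P y i j := by
  fin_cases j <;> exact ((hP _ _).pd _).sub ((hP _ _).pd _)

lemma entry_comm_of_transpose_eq (hP : ∀ x, (P x)ᵀ = P x) (l m : Fin 3) :
    (fun y => P y l m) = fun y => P y m l :=
  funext fun y => congrFun (congrFun (hP y) m) l

lemma trace_mCurl_eq_zero (hP : ∀ x, (P x)ᵀ = P x) (x : Fin 3 → ℝ) : trace (mCurl P x) = 0 := by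
  simp [trace, mCurl, vcurl, Fin.sum_univ_three, entry_comm_of_transpose_eq hP 1 0,
    entry_comm_of_transpose_eq hP 2 0, entry_comm_of_transpose_eq hP 2 1]

lemma incM_isSymm (hP : ∀ x, (P x)ᵀ = P x) (hP₂ : ∀ i j, ContDiff ℝ 2 fun y => P y i j)
    (x : Fin 3 → ℝ) : (incM P x).IsSymm := by
  have hdiff : ∀ k i j, DifferentiableAt ℝ (pd k fun y => P y i j) x := fun k i j =>
    ((hP₂ i j).pd (n := 1) k).differentiable one_ne_zero x
  have hcomm : ∀ a b l m, pd a (pd b fun y => P y l m) x = pd b (pd a fun y => P y l m) x :=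
    fun a b l m => pd_comm (hP₂ l m) a b x
  ext i j
  fin_cases i <;> fin_cases j <;>
    simp only [incM, mCurl, vcurl, of_apply, transpose_apply, Fin.isValue, cons_val_zero,
      cons_val_one, cons_val_two, head_cons, tail_cons, Fin.mk_one, Fin.zero_eta, Fin.reduceFinMk,
      pd_sub (hdiff _ _ _) (hdiff _ _ _), entry_comm_of_transpose_eq hP 1 0,
      entry_comm_of_transpose_eq hP 2 0, entry_comm_of_transpose_eq hP 2 1,
      hcomm 1 0, hcomm 2 0, hcomm 2 1] <;>
    ring

end

noncomputable def momentM (α₁ α₂ α₃ : ℝ) (X : Matrix (Fin 3) (Fin 3) ℝ) :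
    Matrix (Fin 3) (Fin 3) ℝ :=
  α₁ • devM (symM X) + α₂ • skewM X + (α₃ * trace X) • (1 : Matrix (Fin 3) (Fin 3) ℝ)

lemma momentM_of_trace_eq_zero (α₁ α₂ α₃ : ℝ) {X : Matrix (Fin 3) (Fin 3) ℝ}
    (hX : trace X = 0) :
    momentM α₁ α₂ α₃ X = ((α₁ + α₂) / 2) • X + ((α₁ - α₂) / 2) • Xᵀ := by
  simp only [momentM, devM, symM, skewM, trace_smul, trace_add, trace_transpose, hX]
  module

lemma mCurl_momentM_mCurl (α₁ α₂ α₃ : ℝ) {P : (Fin 3 → ℝ) → Matrix (Fin 3) (Fin 3) ℝ}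
    (hP : ∀ x, (P x)ᵀ = P x) (hP₂ : ∀ i j, ContDiff ℝ 2 fun y => P y i j) (x : Fin 3 → ℝ) :
    mCurl (fun y => momentM α₁ α₂ α₃ (mCurl P y)) x =
      ((α₁ + α₂) / 2) • mCurl (mCurl P) x + ((α₁ - α₂) / 2) • incM P x := by
  have hdiff : ∀ i j, Differentiable ℝ fun y => mCurl P y i j := fun i j =>
    (contDiff_mCurl_apply (n := 1) hP₂ i j).differentiable one_ne_zero
  simp only [momentM_of_trace_eq_zero α₁ α₂ α₃ (trace_mCurl_eq_zero hP _)]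
  rw [mCurl_add (A := fun y => _ • mCurl P y) (B := fun y => _ • (mCurl P y)ᵀ)
      (fun i j => (hdiff i j x).const_smul ((α₁ + α₂) / 2))
      (fun i j => (hdiff j i x).const_smul ((α₁ - α₂) / 2)),
    mCurl_smul, mCurl_smul, incM]

lemma Matrix.eq_zero_of_isSymm_smul_add {n R : Type*} [Field R] {a : R} {M S : Matrix n n R}
    (h : (a • M + S).IsSymm) (hS : S.IsSymm) (hM : ¬ M.IsSymm) : a = 0 := by
  have hMa : a • Mᵀ = a • M := by
    simpa [IsSymm, transpose_add, transpose_smul, hS.eq] using h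
  by_contra ha
  exact hM (smul_right_injective _ ha hMa)

noncomputable def curlWitness (y : Fin 3 → ℝ) : Matrix (Fin 3) (Fin 3) ℝ :=
  !![y 0 * y 1, 0, 0; 0, 0, 0; 0, 0, 0]

lemma curlWitness_transpose (x : Fin 3 → ℝ) : (curlWitness x)ᵀ = curlWitness x := by
  ext i j
  fin_cases i <;> fin_cases j <;> rfl

lemma contDiff_curlWitness_apply (i j : Fin 3) : ContDiff ℝ 2 fun y => curlWitness y i j := by
  fin_cases i <;> fin_cases j <;>
    first
    | exact contDiff_const
    | exact (contDiff_apply ℝ ℝ 0).mul (contDiff_apply ℝ ℝ 1)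

lemma mCurl_curlWitness : mCurl curlWitness = fun y => !![0, 0, -y 0; 0, 0, 0; 0, 0, 0] := by
  funext y
  ext i j
  fin_cases i <;> fin_cases j <;> simp [mCurl, vcurl, curlWitness, pd_const, pd_apply_mul_apply]

lemma not_isSymm_mCurl_mCurl_curlWitness (x : Fin 3 → ℝ) :
    ¬ (mCurl (mCurl curlWitness) x).IsSymm := by
  rw [mCurl_curlWitness]
  intro h
  have h₁₀ := congrFun (congrFun h 0) 1
  simp [mCurl, vcurl, pd_const, pd_neg, pd_apply] at h₁₀

/-- For symmetric-valued matrix fields P, the matrix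
Curl(α₁ dev sym Curl P + α₂ skew Curl P + α₃ tr(Curl P)·𝟙) is symmetric at
every point for every such P if and only if α₁ = −α₂. -/
theorem sym_curl_moment_iff
    (α₁ α₂ α₃ : ℝ) :
    (∀ P : (Fin 3 → ℝ) → Matrix (Fin 3) (Fin 3) ℝ,
      (∀ x, (P x)ᵀ = P x) →
      (∀ i j, ContDiff ℝ 2 (fun y => P y i j)) →
      ∀ x : Fin 3 → ℝ,
        (mCurl (fun y =>
            α₁ • devM (symM (mCurl P y)) + α₂ • skewM (mCurl P y) +
              (α₃ * Matrix.trace (mCurl P y)) • (1 : Matrix (Fin 3) (Fin 3) ℝ)) x)ᵀ =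
          mCurl (fun y =>
            α₁ • devM (symM (mCurl P y)) + α₂ • skewM (mCurl P y) +
              (α₃ * Matrix.trace (mCurl P y)) • (1 : Matrix (Fin 3) (Fin 3) ℝ)) x) ↔
      α₁ = -α₂ := by
  change (∀ P : (Fin 3 → ℝ) → Matrix (Fin 3) (Fin 3) ℝ, (∀ x, (P x)ᵀ = P x) →
    (∀ i j, ContDiff ℝ 2 fun y => P y i j) →
    ∀ x, (mCurl (fun y => momentM α₁ α₂ α₃ (mCurl P y)) x).IsSymm) ↔ α₁ = -α₂
  constructor
  · intro H
    have h := H curlWitness curlWitness_transpose contDiff_curlWitness_apply 0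
    rw [mCurl_momentM_mCurl α₁ α₂ α₃ curlWitness_transpose contDiff_curlWitness_apply] at h
    have h₀ := Matrix.eq_zero_of_isSymm_smul_add h
      ((incM_isSymm curlWitness_transpose contDiff_curlWitness_apply 0).smul _)
      (not_isSymm_mCurl_mCurl_curlWitness 0)
    linarith
  · rintro h P hP hP₂ x
    rw [mCurl_momentM_mCurl α₁ α₂ α₃ hP hP₂, h, neg_add_cancel, zero_div, zero_smul, zero_add]
    exact (incM_isSymm hP hP₂ x).smul _
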